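/- arXiv:1508.05667 — 2 statements merged into one kernel-verified Lean document; each statement's English description precedes it below -/
import Mathlib

section
/- Let F be a fusion system on a finite p-group S, and let X be a finite left semicharacteristic biset for F containing a subbiset isomorphic to S×_{(S,id)}S. Let G be the group (under composition) of all bijections f : X → X satisfying f(xs) = f(x)s for all x ∈ X and s ∈ S, and embed S into G via s ↦ (x ↦ sx). Then F = F_S(G). -/
/-- The conjugation homomorphism `c_s : P → Q`, `u ↦ s u s⁻¹`,
for subgroups `P, Q` of `S` with `s P s⁻¹ ≤ Q`. -/
def conjHom {S : Type} [Group S] (P Q : Subgroup S) (s : S)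
    (h : ∀ p ∈ P, s * p * s⁻¹ ∈ Q) : ↥P →* ↥Q where
  toFun p := ⟨s * (p : S) * s⁻¹, h p p.2⟩
  map_one' := by ext; simp
  map_mul' a b := by ext; push_cast; group

/-- A fusion system on a group `S`: for each pair of subgroups `P, Q` of `S` a set
of injective group homomorphisms `P → Q`, containing all conjugation maps induced by
elements of `S`, closed under composition, and such that every morphism, corestricted
to an isomorphism onto its image, lies in the system together with its inverse. -/
structure FusionSystem (S : Type) [Group S] where
  Hom : ∀ P Q : Subgroup S, Set (↥P →* ↥Q)
  inj : ∀ {P Q : Subgroup S} {φ : ↥P →* ↥Q}, φ ∈ Hom P Q → Function.Injective φ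
  conj_mem : ∀ (P Q : Subgroup S) (s : S) (h : ∀ p ∈ P, s * p * s⁻¹ ∈ Q),
    conjHom P Q s h ∈ Hom P Q
  comp_mem : ∀ {P Q R : Subgroup S} {φ : ↥P →* ↥Q} {ψ : ↥Q →* ↥R},
    φ ∈ Hom P Q → ψ ∈ Hom Q R → ψ.comp φ ∈ Hom P R
  restrict_mem : ∀ {P Q : Subgroup S} {φ : ↥P →* ↥Q}, φ ∈ Hom P Q →
    ∃ ψ ∈ Hom P (Subgroup.map Q.subtype φ.range),
      ∃ χ ∈ Hom (Subgroup.map Q.subtype φ.range) P,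
        (∀ u : ↥P, ((ψ u : S)) = ((φ u : ↥Q) : S)) ∧
        (∀ u, χ (ψ u) = u) ∧ (∀ v, ψ (χ v) = v)

/-- Two subgroups are `F`-conjugate if there is an isomorphism between them in `F`. -/
def FConj {S : Type} [Group S] (F : FusionSystem S) (P P' : Subgroup S) : Prop :=
  ∃ φ ∈ F.Hom P P', Function.Bijective φ

/-- An `S`-`S`-biset: a set with commuting left and right `S`-actions. -/
structure Biset (S : Type) [Group S] where
  X : Type
  l : S → X → X
  r : X → S → X
  l_one : ∀ x, l 1 x = x
  l_mul : ∀ s t x, l (s * t) x = l s (l t x)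
  r_one : ∀ x, r x 1 = x
  r_mul : ∀ x s t, r x (s * t) = r (r x s) t
  lr_comm : ∀ s x t, l s (r x t) = r (l s x) t

/-- The relation on `S × S` generated by `(xq, y) ∼ (x, φ(q)y)` for `q ∈ Q`. -/
def amalgRel {S : Type} [Group S] (Q : Subgroup S) (φ : ↥Q →* S) :
    S × S → S × S → Prop :=
  fun a b => ∃ q : Q, a.1 = b.1 * q ∧ b.2 = φ q * a.2

/-- The `S`-`S`-biset `S ×_{(Q,φ)} S`. -/
def amalgBiset {S : Type} [Group S] (Q : Subgroup S) (φ : ↥Q →* S) : Biset S where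
  X := Quot (amalgRel Q φ)
  l s := Quot.map (fun a => (s * a.1, a.2))
    (by rintro a b ⟨q, h1, h2⟩; exact ⟨q, by simp only []; rw [h1, mul_assoc], h2⟩)
  r x t := Quot.map (fun a => (a.1, a.2 * t))
    (by rintro a b ⟨q, h1, h2⟩; exact ⟨q, h1, by simp only []; rw [h2, mul_assoc]⟩) x
  l_one := by rintro ⟨a⟩; simp [Quot.map]
  l_mul := by rintro s t ⟨a⟩; simp [Quot.map, mul_assoc]
  r_one := by rintro ⟨a⟩; simp [Quot.map]
  r_mul := by rintro ⟨a⟩ s t; simp [Quot.map, mul_assoc]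
  lr_comm := by rintro s ⟨a⟩ t; simp [Quot.map]

/-- An injective map of `S`-`S`-bisets from `A` into `B` (a copy of `A` as a subbiset of `B`). -/
def ContainsCopy {S : Type} [Group S] (A B : Biset S) : Prop :=
  ∃ e : A.X → B.X, Function.Injective e ∧
    (∀ s z, e (A.l s z) = B.l s (e z)) ∧ (∀ z t, e (A.r z t) = B.r (e z) t)

/-- An isomorphism of `S`-`S`-bisets from `A` onto the subset `O` of `B`. -/
def CopyOnto {S : Type} [Group S] (A B : Biset S) (O : Set B.X) : Prop :=
  ∃ e : A.X → B.X, Function.Injective e ∧ Set.range e = O ∧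
    (∀ s z, e (A.l s z) = B.l s (e z)) ∧ (∀ z t, e (A.r z t) = B.r (e z) t)

/-- `X` is `F`-generated: every transitive subbiset (i.e. every `S`-`S`-orbit) of `X`
is isomorphic to `S ×_{(Q,φ)} S` for some `Q ≤ S` and `φ ∈ Hom_F(Q, S)`. -/
def FGenerated {S : Type} [Group S] (F : FusionSystem S) (B : Biset S) : Prop :=
  ∀ x : B.X, ∃ (Q : Subgroup S) (φ : ↥Q →* ↥(⊤ : Subgroup S)), φ ∈ F.Hom Q ⊤ ∧
    CopyOnto (amalgBiset Q ((Subgroup.subtype ⊤).comp φ)) B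
      {y | ∃ s t : S, y = B.l s (B.r x t)}

/-- `X` is left `F`-stable: for every `Q ≤ S` and `φ ∈ Hom_F(Q, S)`, the `Q`-`S`-bisets
`_Q X` and `_φ X` are isomorphic. -/
def LeftFStable {S : Type} [Group S] (F : FusionSystem S) (B : Biset S) : Prop :=
  ∀ (Q : Subgroup S) (φ : ↥Q →* ↥(⊤ : Subgroup S)), φ ∈ F.Hom Q ⊤ →
    ∃ e : B.X ≃ B.X,
      (∀ (q : ↥Q) (x : B.X), e (B.l (q : S) x) = B.l ((φ q : ↥(⊤ : Subgroup S)) : S) (e x)) ∧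
      (∀ (x : B.X) (s : S), e (B.r x s) = B.r (e x) s)

/-- A left semicharacteristic biset for `F`: a finite `S`-`S`-biset which is
`F`-generated and left `F`-stable. -/
def IsLeftSemicharacteristic {S : Type} [Group S] (F : FusionSystem S) (B : Biset S) : Prop :=
  Finite B.X ∧ FGenerated F B ∧ LeftFStable F B

/-- The group of automorphisms of `X` as a right `S`-set: all bijections `f : X → X`
with `f (x s) = f x · s`. -/
def rEquivGroup {S : Type} [Group S] (B : Biset S) : Subgroup (Equiv.Perm B.X) where
  carrier := {f | ∀ x s, f (B.r x s) = B.r (f x) s}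
  one_mem' := fun _ _ => rfl
  mul_mem' := by
    intro f g hf hg x s
    simp only [Equiv.Perm.mul_apply, hg x s, hf (g x) s]
  inv_mem' := by
    intro f hf x s
    apply f.injective
    rw [hf]; simp

/-- The virtual fixed-point count `|X^P|` of a virtual `S`-set given by the formal
sum `Σ_H (c H) · S/H`. -/
noncomputable def fixedCount {S : Type} [Group S] (c : Subgroup S → ℚ) (P : Subgroup S) : ℚ :=
  ∑ᶠ H : Subgroup S, c H * (Nat.card {x : S ⧸ H // ∀ p ∈ P, p • x = x} : ℚ)

/-- Subgroups `P, Q` of `S` are `S`-conjugate. -/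
def SConj {S : Type} [Group S] (P Q : Subgroup S) : Prop :=
  ∃ g : S, Q = Subgroup.map (MulAut.conj g).toMonoidHom P

/-- An isomorphism of `S`-`S`-bisets. -/
def BisetIso {S : Type} [Group S] (A B : Biset S) : Prop :=
  ∃ e : A.X ≃ B.X,
    (∀ s z, e (A.l s z) = B.l s (e z)) ∧ (∀ z t, e (A.r z t) = B.r (e z) t)

/-- Disjoint union of a family of `S`-`S`-bisets. -/
def sigmaBiset {S : Type} [Group S] {ι : Type} (B : ι → Biset S) : Biset S where
  X := Σ i : ι, (B i).X
  l s x := ⟨x.1, (B x.1).l s x.2⟩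
  r x t := ⟨x.1, (B x.1).r x.2 t⟩
  l_one := by rintro ⟨i, x⟩; simp [(B i).l_one]
  l_mul := by rintro s t ⟨i, x⟩; simp [(B i).l_mul]
  r_one := by rintro ⟨i, x⟩; simp [(B i).r_one]
  r_mul := by rintro ⟨i, x⟩ s t; simp [(B i).r_mul]
  lr_comm := by rintro s ⟨i, x⟩ t; simp [(B i).lr_comm]

/-- The biset `S ×_{(S,α)} S` for an endomorphism `α` of `S` (with `Q = S`). -/
def fullAmalg (S : Type) [Group S] (α : S →* S) : Biset S :=
  amalgBiset ⊤ (α.comp (Subgroup.subtype ⊤))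

/-- `Y₀ = ∐ᵢ S ×_{(S,αᵢ)} S` for a family of morphisms `αᵢ ∈ Hom_F(S,S)`. -/
def diagUnion (S : Type) [Group S] {n : ℕ}
    (α : Fin n → (↥(⊤ : Subgroup S) →* ↥(⊤ : Subgroup S))) : Biset S :=
  sigmaBiset (fun i => amalgBiset ⊤ ((Subgroup.subtype ⊤).comp (α i)))

/-!
If `φ ∈ F`, left `F`-stability for `φ` is a right-equivariant bijection `g` of `X` with
`g (u x) = φ(u) g(x)`, i.e. an element of `G` conjugating `ι u` to `ι (φ u)`. Conversely, let
`g ∈ G` conjugate `ι u` to `ι (φ u)` for all `u ∈ P`. The point `x₀ = [1, 1]` of the copy of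
`S ×_{(S,id)} S` satisfies `s x₀ = x₀ s`, hence `y = g x₀` satisfies `φ(u) y = y u`. Writing `y`
as `[a, b]` in its orbit `S ×_{(R,ψ)} S` with `ψ ∈ F`, this says `φ(u) = a q a⁻¹` and
`b u b⁻¹ = ψ(q)` for some `q ∈ R`, so `φ = c_a ∘ ψ⁻¹ ∘ c_b` is a morphism of `F`.
-/

lemma amalgRel_equivalence {S : Type} [Group S] (Q : Subgroup S) (φ : ↥Q →* S) :
    Equivalence (amalgRel Q φ) where
  refl _ := ⟨1, by simp, by simp⟩
  symm := by
    rintro a b ⟨q, h1, h2⟩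
    exact ⟨q⁻¹, by simp [h1], by simp [h2]⟩
  trans := by
    rintro a b c ⟨q, h1, h2⟩ ⟨q', h1', h2'⟩
    exact ⟨q' * q, by simp [h1, h1', mul_assoc], by simp [h2', h2, mul_assoc]⟩

lemma amalgBiset_l_mk_eq_r_mk_iff {S : Type} [Group S] {Q : Subgroup S} {φ : ↥Q →* S}
    {s t a b : S} :
    (amalgBiset Q φ).l s (Quot.mk _ (a, b)) = (amalgBiset Q φ).r (Quot.mk _ (a, b)) t ↔
      ∃ q : Q, s * a = a * q ∧ b * t = φ q * b :=
  (Quot.eq (r := amalgRel Q φ) (x := (s * a, b)) (y := (a, b * t))).trans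
    (amalgRel_equivalence Q φ).eqvGen_iff

namespace FusionSystem

variable {S : Type} [Group S] (F : FusionSystem S)

lemma mem_of_coe_eq {P Q Q' : Subgroup S} {φ : ↥P →* ↥Q} (hφ : φ ∈ F.Hom P Q)
    (φ' : ↥P →* ↥Q') (h : ∀ u, (φ' u : S) = φ u) : φ' ∈ F.Hom P Q' := by
  obtain ⟨ψ, hψ, -, -, hψφ, -, -⟩ := F.restrict_mem hφ
  have hle : ∀ v ∈ Subgroup.map Q.subtype φ.range, 1 * v * 1⁻¹ ∈ Q' := by
    rintro _ ⟨_, ⟨u, rfl⟩, rfl⟩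
    simp [← h u]
  convert F.comp_mem hψ (F.conj_mem _ Q' 1 hle)
  ext u
  simp [conjHom, hψφ, h]

lemma mem_of_comp_mem {P Q Q' R : Subgroup S} {ψ : ↥R →* ↥Q} {θ : ↥P →* ↥Q'}
    (hψ : ψ ∈ F.Hom R Q) (hθ : θ ∈ F.Hom P Q') (χ : ↥P →* ↥R)
    (h : ∀ u, (ψ (χ u) : S) = θ u) : χ ∈ F.Hom P R := by
  obtain ⟨ψ₁, -, ψ₁inv, hψ₁inv, hψ₁ψ, hinv, -⟩ := F.restrict_mem hψ
  have hψ₁χ : ψ₁.comp χ ∈ F.Hom P _ :=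
    F.mem_of_coe_eq hθ _ fun u => by simp [hψ₁ψ, h]
  convert F.comp_mem hψ₁χ hψ₁inv
  ext u
  simp [hinv]

lemma mem_of_conj_twisted {P Q R : Subgroup S} {ψ : ↥R →* ↥(⊤ : Subgroup S)}
    (hψ : ψ ∈ F.Hom R ⊤) (a b : S) (φ : ↥P →* ↥Q)
    (h : ∀ u : P, ∃ q : R, (φ u : S) * a = a * q ∧ b * u = ψ q * b) : φ ∈ F.Hom P Q := by
  let χ : ↥P →* ↥R :=
    ((MulAut.conj a⁻¹).toMonoidHom.comp (Q.subtype.comp φ)).codRestrict R fun u => by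
      obtain ⟨q, hq, -⟩ := h u
      simp [mul_assoc, hq]
  have hχ : ∀ u, (χ u : S) = a⁻¹ * φ u * a := fun u => by simp [χ]
  have hψχ : ∀ u, (ψ (χ u) : S) = b * u * b⁻¹ := fun u => by
    obtain ⟨q, hqa, hqb⟩ := h u
    have hq : χ u = q := Subtype.ext (by rw [hχ, mul_assoc, hqa]; group)
    rw [hq, eq_mul_inv_iff_mul_eq, hqb]
  have hχF : χ ∈ F.Hom P R :=
    F.mem_of_comp_mem hψ (F.conj_mem P ⊤ b fun _ _ => trivial) χ fun u => by
      simp [hψχ, conjHom]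
  refine F.mem_of_coe_eq (F.comp_mem hχF (F.conj_mem R ⊤ a fun _ _ => trivial)) φ fun u => ?_
  simp [conjHom, hχ, mul_assoc]

end FusionSystem

section Biset

variable {S : Type} [Group S] {F : FusionSystem S} {B : Biset S}

lemma ContainsCopy.exists_l_eq_r
    (h : ContainsCopy (amalgBiset (⊤ : Subgroup S) (Subgroup.subtype ⊤)) B) :
    ∃ x₀ : B.X, ∀ s, B.l s x₀ = B.r x₀ s := by
  obtain ⟨e, -, hel, her⟩ := h
  refine ⟨e (Quot.mk _ (1, 1)), fun s => (hel s _).symm.trans ((congrArg e ?_).trans (her _ s))⟩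
  exact amalgBiset_l_mk_eq_r_mk_iff.mpr ⟨⟨s, Subgroup.mem_top s⟩, by simp, by simp⟩

/-- `[a, b]` is the class corresponding to `y` in its orbit `S ×_{(R,ψ)} S`. -/
lemma FGenerated.exists_conj_twisted (hgen : FGenerated F B) (y : B.X) :
    ∃ (R : Subgroup S) (ψ : ↥R →* ↥(⊤ : Subgroup S)), ψ ∈ F.Hom R ⊤ ∧ ∃ a b : S,
      ∀ s t, B.l s y = B.r y t → ∃ q : R, s * a = a * q ∧ b * t = ψ q * b := by
  obtain ⟨R, ψ, hψ, e, he, hrange, hel, her⟩ := hgen y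
  obtain ⟨⟨a, b⟩, rfl⟩ : y ∈ Set.range e := hrange ▸ ⟨1, 1, by rw [B.r_one, B.l_one]⟩
  exact ⟨R, ψ, hψ, a, b, fun s t hst =>
    amalgBiset_l_mk_eq_r_mk_iff.mp (he ((hel s _).trans (hst.trans (her _ t).symm)))⟩

lemma FGenerated.mem_of_l_eq_r (hgen : FGenerated F B) {P Q : Subgroup S} (φ : ↥P →* ↥Q)
    (y : B.X) (hy : ∀ u : P, B.l (φ u) y = B.r y u) : φ ∈ F.Hom P Q := by
  obtain ⟨R, ψ, hψ, a, b, hab⟩ := hgen.exists_conj_twisted y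
  exact F.mem_of_conj_twisted hψ a b φ fun u => hab _ _ (hy u)

lemma LeftFStable.exists_rEquivGroup (hstab : LeftFStable F B) {P Q : Subgroup S}
    {φ : ↥P →* ↥Q} (hφ : φ ∈ F.Hom P Q) :
    ∃ g : ↥(rEquivGroup B), ∀ (u : P) x,
      (g : Equiv.Perm B.X) (B.l u x) = B.l (φ u) ((g : Equiv.Perm B.X) x) := by
  obtain ⟨e, hel, her⟩ :=
    hstab P ((Subgroup.inclusion le_top).comp φ) (F.mem_of_coe_eq hφ _ fun _ => rfl)
  exact ⟨⟨e, her⟩, hel⟩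

lemma rEquivGroup_eq_conj_iff {ι : S →* ↥(rEquivGroup B)}
    (hι : ∀ (s : S) (x : B.X), (ι s : Equiv.Perm B.X) x = B.l s x) (g : ↥(rEquivGroup B))
    (s t : S) :
    ι s = g * ι t * g⁻¹ ↔ ∀ x, (g : Equiv.Perm B.X) (B.l t x) = B.l s ((g : Equiv.Perm B.X) x) := by
  rw [eq_mul_inv_iff_mul_eq, Subtype.ext_iff, Equiv.ext_iff]
  simp only [Subgroup.coe_mul, Equiv.Perm.mul_apply, hι]
  exact forall_congr' fun _ => eq_comm

end Biset

theorem fusionSystem_eq_of_leftSemicharacteristic_general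
    (S : Type) [Group S]
    (F : FusionSystem S) (B : Biset S)
    (hchar : IsLeftSemicharacteristic F B)
    (hdiag : ContainsCopy (amalgBiset (⊤ : Subgroup S) (Subgroup.subtype ⊤)) B)
    (ι : S →* ↥(rEquivGroup B))
    (hι : ∀ (s : S) (x : B.X), ((ι s : Equiv.Perm B.X)) x = B.l s x) :
    ∀ (P Q : Subgroup S) (φ : ↥P →* ↥Q),
      φ ∈ F.Hom P Q ↔
        ∃ g : ↥(rEquivGroup B), ∀ u : ↥P, ι ((φ u : ↥Q) : S) = g * ι (u : S) * g⁻¹ := by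
  obtain ⟨-, hgen, hstab⟩ := hchar
  obtain ⟨x₀, hx₀⟩ := hdiag.exists_l_eq_r
  intro P Q φ
  simp only [rEquivGroup_eq_conj_iff hι]
  refine ⟨hstab.exists_rEquivGroup, ?_⟩
  rintro ⟨g, hg⟩
  refine hgen.mem_of_l_eq_r φ ((g : Equiv.Perm B.X) x₀) fun u => ?_
  rw [← hg, hx₀, g.2]

/-- If `X` is a left semicharacteristic biset for `F` containing a copy of
`S ×_{(S,id)} S`, and `G` is the group of right-`S`-equivariant bijections of `X`,
with `S` embedded into `G` via `s ↦ (x ↦ s x)`, then `F = F_S(G)`. -/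
theorem fusionSystem_eq_of_leftSemicharacteristic
    (p : ℕ) [Fact p.Prime] (S : Type) [Group S] [Fintype S] (hS : IsPGroup p S)
    (F : FusionSystem S) (B : Biset S)
    (hchar : IsLeftSemicharacteristic F B)
    (hdiag : ContainsCopy (amalgBiset (⊤ : Subgroup S) (Subgroup.subtype ⊤)) B)
    (ι : S →* ↥(rEquivGroup B))
    (hι : ∀ (s : S) (x : B.X), ((ι s : Equiv.Perm B.X)) x = B.l s x) :
    ∀ (P Q : Subgroup S) (φ : ↥P →* ↥Q),
      φ ∈ F.Hom P Q ↔
        ∃ g : ↥(rEquivGroup B), ∀ u : ↥P, ι ((φ u : ↥Q) : S) = g * ι (u : S) * g⁻¹ :=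
  fusionSystem_eq_of_leftSemicharacteristic_general S F B hchar hdiag ι hι
end

section
/- Let F be a fusion system on a finite p-group S, let H be a collection of subgroups of S closed under F-conjugation and under taking subgroups, and let X₀ be a virtual S-set with rational coefficients such that |X₀^P| = |X₀^{P'}| for all F-conjugate P, P' ∉ H. Let 𝒫 be an F-conjugacy class of subgroups contained in H each of whose members is maximal under inclusion among the members of H, and choose P ∈ 𝒫 with |X₀^P| ≥ |X₀^{P'}| for all P' ∈ 𝒫. Define X₁ = X₀ + Σ_{P'} ((|X₀^P| − |X₀^{P'}|)/|N_S(P')/P'|) · S/P', where P' runs over a set of representatives of the subgroups in 𝒫 up to S-conjugacy. Then: (a) |X₁^{P'}| = |X₁^{P''}| for all P', P'' ∈ 𝒫; (b) |X₁^Q| = |X₀^Q| for every subgroup Q of S with Q ∉ H; and (c) X₁ − X₀ is a virtual S-set with nonnegative rational coefficients. -/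
/-! Adding `S/K` to a virtual `S`-set changes `|X^Q|` by `|(S/K)^Q|`, and `gK` is fixed by `Q`
exactly when `Q ≤ gKg⁻¹`. For `Q ∉ H` this never happens with `K ∈ H`, since `H` is closed
under subgroups and `F`-conjugation, so (b) holds. For `P' ∈ Pcl`, maximality of `Pcl` in `H`
forces `P'` to be `S`-conjugate to every representative it is subconjugate to, so only the
representative `K₀` of its `S`-class contributes, with
`|(S/K₀)^{P'}| = |(S/K₀)^{K₀}| = |N_S(K₀)/K₀|`; the coefficient of `S/K₀` cancels this index
and lifts `|X^{P'}|` to `|X₀^P|`. -/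

section FixedCosets

open scoped Pointwise

variable {S : Type} [Group S]

noncomputable def cosetFixedCount (K Q : Subgroup S) : ℕ :=
  Nat.card {x : S ⧸ K // ∀ q ∈ Q, q • x = x}

theorem forall_smul_mk_eq_iff_le_conj_smul (K Q : Subgroup S) (g : S) :
    (∀ q ∈ Q, q • (g : S ⧸ K) = g) ↔ Q ≤ MulAut.conj g • K := by
  have hmk : ((g : S) : S ⧸ K) = g • ((1 : S) : S ⧸ K) := by simp
  show Q ≤ MulAction.stabilizer S _ ↔ _
  rw [hmk, MulAction.stabilizer_smul_eq_stabilizer_map_conj, MulAction.stabilizer_quotient]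
  rfl

theorem cosetFixedCount_eq_zero {K Q : Subgroup S} (h : ∀ g : S, ¬ Q ≤ MulAut.conj g • K) :
    cosetFixedCount K Q = 0 := by
  refine @Nat.card_of_isEmpty _ ⟨fun ⟨x, hx⟩ => ?_⟩
  obtain ⟨g, rfl⟩ := QuotientGroup.mk_surjective x
  exact h g ((forall_smul_mk_eq_iff_le_conj_smul K Q g).1 hx)

theorem cosetFixedCount_eq_of_sConj (K : Subgroup S) {Q Q' : Subgroup S} (h : SConj Q Q') :
    cosetFixedCount K Q' = cosetFixedCount K Q := by
  obtain ⟨g, rfl⟩ := h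
  refine Nat.card_congr (Equiv.subtypeEquiv (MulAction.toPerm g⁻¹) fun x => ?_)
  show MulAut.conj g • Q ≤ MulAction.stabilizer S x ↔ Q ≤ MulAction.stabilizer S (g⁻¹ • x)
  rw [Subgroup.pointwise_smul_subset_iff, MulAction.stabilizer_smul_eq_stabilizer_map_conj,
    map_inv]
  rfl

theorem cosetFixedCount_self [Finite S] (K : Subgroup S) :
    cosetFixedCount K K =
      Nat.card (Subgroup.normalizer (K : Set S) ⧸ K.subgroupOf (Subgroup.normalizer (K : Set S))) :=
  Nat.card_congr ((Equiv.subtypeEquivRight fun _ => Subtype.forall.symm).trans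
    (Sylow.fixedPointsMulLeftCosetsEquivQuotient K))

theorem fixedCount_eq_finsum (c : Subgroup S → ℚ) (Q : Subgroup S) :
    fixedCount c Q = ∑ᶠ K, c K * cosetFixedCount K Q := rfl

theorem fixedCount_eq_of_sConj (c : Subgroup S → ℚ) {Q Q' : Subgroup S} (h : SConj Q Q') :
    fixedCount c Q' = fixedCount c Q := by
  simp only [fixedCount_eq_finsum, cosetFixedCount_eq_of_sConj _ h]

theorem fixedCount_add_ite [Finite S] (c d : Subgroup S → ℚ) (R : Finset (Subgroup S))
    [DecidablePred (· ∈ R)] (Q : Subgroup S) :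
    fixedCount (fun K => c K + if K ∈ R then d K else 0) Q =
      fixedCount c Q + ∑ K ∈ R, d K * cosetFixedCount K Q := by
  have := Fintype.ofFinite (Subgroup S)
  simp only [fixedCount_eq_finsum, finsum_eq_sum_of_fintype, add_mul, Finset.sum_add_distrib,
    ite_mul, zero_mul]
  rw [← Finset.sum_filter]
  congr 2
  ext K
  simp

end FixedCosets

section FusionClosure

open scoped Pointwise

variable {S : Type} [Group S]

theorem fConj_conj_smul (F : FusionSystem S) (Q : Subgroup S) (g : S) :
    FConj F Q (MulAut.conj g • Q) := by
  have hmem : ∀ q ∈ Q, g * q * g⁻¹ ∈ MulAut.conj g • Q := fun q hq =>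
    Subgroup.smul_mem_pointwise_smul q (MulAut.conj g) Q hq
  refine ⟨_, F.conj_mem Q _ g hmem, F.inj (F.conj_mem Q _ g hmem), fun y =>
    ⟨⟨_, Subgroup.mem_pointwise_smul_iff_inv_smul_mem.1 y.2⟩, Subtype.ext ?_⟩⟩
  simp [conjHom, mul_assoc]

theorem mem_of_le_conj_smul (F : FusionSystem S) {H : Set (Subgroup S)}
    (hconj : ∀ P ∈ H, ∀ P', FConj F P P' → P' ∈ H) (hsub : ∀ P ∈ H, ∀ P', P' ≤ P → P' ∈ H)
    {K Q : Subgroup S} {g : S} (hK : K ∈ H) (hle : Q ≤ MulAut.conj g • K) : Q ∈ H := by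
  rw [Subgroup.subset_pointwise_smul_iff, ← map_inv] at hle
  simpa using hconj _ (hsub K hK _ hle) _ (fConj_conj_smul F _ g)

theorem sConj_of_le_conj_smul {F : FusionSystem S} {H : Set (Subgroup S)} {P K : Subgroup S}
    (hmax : ∀ Q, FConj F P Q → ∀ K ∈ H, Q ≤ K → Q = K) (hK : K ∈ H) {g : S}
    (hle : P ≤ MulAut.conj g • K) : SConj K P := by
  rw [Subgroup.subset_pointwise_smul_iff, ← map_inv] at hle
  have hP : P = MulAut.conj g • K :=
    inv_smul_eq_iff.1 (by simpa using hmax _ (fConj_conj_smul F P g⁻¹) K hK hle)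
  exact ⟨g, hP⟩

end FusionClosure

open scoped Classical

theorem one_step_stabilization_general
    (S : Type) [Group S] [Fintype S]
    (F : FusionSystem S) (H : Set (Subgroup S))
    (hHconj : ∀ P ∈ H, ∀ P' : Subgroup S, FConj F P P' → P' ∈ H)
    (hHsub : ∀ P ∈ H, ∀ P' : Subgroup S, P' ≤ P → P' ∈ H)
    (X₀ : Subgroup S → ℚ)
    (Pcl : Set (Subgroup S)) (hPclH : Pcl ⊆ H)
    (hPclclass : ∀ P ∈ Pcl, ∀ P' : Subgroup S, FConj F P P' ↔ P' ∈ Pcl)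
    (hPclmax : ∀ P ∈ Pcl, ∀ Q ∈ H, P ≤ Q → P = Q)
    (P : Subgroup S)
    (hPmax : ∀ P' ∈ Pcl, fixedCount X₀ P' ≤ fixedCount X₀ P)
    (R : Finset (Subgroup S)) (hRPcl : ↑R ⊆ Pcl)
    (hRrep : ∀ Q ∈ Pcl, ∃! Q' : Subgroup S, Q' ∈ R ∧ SConj Q' Q)
    (X₁ : Subgroup S → ℚ)
    (hX₁ : ∀ K : Subgroup S, X₁ K = X₀ K +
      (if K ∈ R then
        (fixedCount X₀ P - fixedCount X₀ K) /
          (Nat.card (↥(Subgroup.normalizer (K : Set S)) ⧸ K.subgroupOf (Subgroup.normalizer (K : Set S))) : ℚ)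
       else 0)) :
    (∀ P' ∈ Pcl, ∀ P'' ∈ Pcl, fixedCount X₁ P' = fixedCount X₁ P'') ∧
    (∀ Q : Subgroup S, Q ∉ H → fixedCount X₁ Q = fixedCount X₀ Q) ∧
    (∀ K : Subgroup S, X₀ K ≤ X₁ K) := by
  set n : Subgroup S → ℚ := fun K =>
    Nat.card (Subgroup.normalizer (K : Set S) ⧸ K.subgroupOf (Subgroup.normalizer (K : Set S)))
  have hX₁' : X₁ = fun K =>
      X₀ K + if K ∈ R then (fixedCount X₀ P - fixedCount X₀ K) / n K else 0 := funext hX₁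
  have hclass : ∀ P' ∈ Pcl, fixedCount X₁ P' = fixedCount X₀ P := by
    intro P' hP'
    obtain ⟨K₀, ⟨hK₀R, hK₀P'⟩, hK₀uniq⟩ := hRrep P' hP'
    have hmax : ∀ Q, FConj F P' Q → ∀ K ∈ H, Q ≤ K → Q = K := fun Q hQ =>
      hPclmax Q ((hPclclass P' hP' Q).1 hQ)
    rw [hX₁', fixedCount_add_ite, Finset.sum_eq_single K₀ (fun K hKR hK => ?_) (absurd hK₀R)]
    · have hn : n K₀ ≠ 0 := Nat.cast_ne_zero.2 Nat.card_pos.ne'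
      rw [fixedCount_eq_of_sConj X₀ hK₀P', cosetFixedCount_eq_of_sConj K₀ hK₀P',
        cosetFixedCount_self]
      field_simp
      ring
    · rw [cosetFixedCount_eq_zero fun g hle =>
        hK (hK₀uniq K ⟨hKR, sConj_of_le_conj_smul hmax (hPclH (hRPcl hKR)) hle⟩)]
      simp
  refine ⟨fun P' hP' P'' hP'' => (hclass P' hP').trans (hclass P'' hP'').symm,
    fun Q hQ => ?_, fun K => ?_⟩
  · rw [hX₁', fixedCount_add_ite, Finset.sum_eq_zero fun K hKR => ?_, add_zero]
    rw [cosetFixedCount_eq_zero fun g hle =>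
      hQ (mem_of_le_conj_smul F hHconj hHsub (hPclH (hRPcl hKR)) hle)]
    simp
  · rw [hX₁ K]
    split_ifs with hKR
    · exact le_add_of_nonneg_right
        (div_nonneg (sub_nonneg.2 (hPmax K (hRPcl hKR))) (Nat.cast_nonneg _))
    · simp

/-- The one-step stabilization: adding suitable nonnegative multiples of `S/P'` over
`S`-conjugacy representatives `P'` of a maximal `F`-class `Pcl` in `H` equalizes the
fixed point counts on `Pcl` without changing them outside `H`. -/
theorem one_step_stabilization
    (p : ℕ) [Fact p.Prime] (S : Type) [Group S] [Fintype S] (hS : IsPGroup p S)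
    (F : FusionSystem S) (H : Set (Subgroup S))
    (hHconj : ∀ P ∈ H, ∀ P' : Subgroup S, FConj F P P' → P' ∈ H)
    (hHsub : ∀ P ∈ H, ∀ P' : Subgroup S, P' ≤ P → P' ∈ H)
    (X₀ : Subgroup S → ℚ)
    (hX₀ : ∀ P P' : Subgroup S, P ∉ H → P' ∉ H → FConj F P P' →
      fixedCount X₀ P = fixedCount X₀ P')
    (Pcl : Set (Subgroup S)) (hPclH : Pcl ⊆ H) (hPclne : Pcl.Nonempty)
    (hPclclass : ∀ P ∈ Pcl, ∀ P' : Subgroup S, FConj F P P' ↔ P' ∈ Pcl)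
    (hPclmax : ∀ P ∈ Pcl, ∀ Q ∈ H, P ≤ Q → P = Q)
    (P : Subgroup S) (hP : P ∈ Pcl)
    (hPmax : ∀ P' ∈ Pcl, fixedCount X₀ P' ≤ fixedCount X₀ P)
    (R : Finset (Subgroup S)) (hRPcl : ↑R ⊆ Pcl)
    (hRrep : ∀ Q ∈ Pcl, ∃! Q' : Subgroup S, Q' ∈ R ∧ SConj Q' Q)
    (X₁ : Subgroup S → ℚ)
    (hX₁ : ∀ K : Subgroup S, X₁ K = X₀ K +
      (if K ∈ R then
        (fixedCount X₀ P - fixedCount X₀ K) /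
          (Nat.card (↥(Subgroup.normalizer (K : Set S)) ⧸ K.subgroupOf (Subgroup.normalizer (K : Set S))) : ℚ)
       else 0)) :
    (∀ P' ∈ Pcl, ∀ P'' ∈ Pcl, fixedCount X₁ P' = fixedCount X₁ P'') ∧
    (∀ Q : Subgroup S, Q ∉ H → fixedCount X₁ Q = fixedCount X₀ Q) ∧
    (∀ K : Subgroup S, X₀ K ≤ X₁ K) :=
  one_step_stabilization_general S F H hHconj hHsub X₀ Pcl hPclH hPclclass hPclmax P hPmax R hRPcl
    hRrep X₁ hX₁
end
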